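/- arXiv:2302.08779 — 2 statements merged into one kernel-verified Lean document; each statement's English description precedes it below -/
import Mathlib

section
/- Let W be an n×n column-stochastic matrix with nonnegative entries and π ∈ ℝ^n with strictly positive entries summing to 1 and Wπ = π. Let α > 0, let g(t) ∈ (ℝ^d)^n be any sequence with M := sup_{s≥0} ‖g(s)‖ < ∞ (Euclidean norm on (ℝ^d)^n), and let w(t) ∈ (ℝ^d)^n satisfy w(t+1) = (W⊗I_d)(w(t) − α g(t)) for all t ≥ 0. Suppose D > 0 and ζ ∈ (0,1) satisfy |||W^t − π 1_n^⊤||| ≤ D ζ^t for all t ≥ 0, where |||·||| is the Euclidean operator norm. Then for all t ≥ 0, ‖w(t) − nπ⊗w̄(t)‖ ≤ D ζ^t ‖w(0)‖ + (α D ζ/(1−ζ)) M, where w̄(t) := (1/n) Σ_{i=1}^n w_i(t). -/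
open Finset

/-- π-weighted norm on ℝ^n: ‖x‖_π = (Σ_j x_j²/π_j)^{1/2}. -/
noncomputable def wnorm {n : ℕ} (p : Fin n → ℝ) (x : Fin n → ℝ) : ℝ :=
  Real.sqrt (∑ j, x j ^ 2 / p j)

/-- Matrix operator norm induced by the π-weighted norm. -/
noncomputable def matNorm {n : ℕ} (p : Fin n → ℝ) (A : Matrix (Fin n) (Fin n) ℝ) : ℝ :=
  ⨆ x : {x : Fin n → ℝ // x ≠ 0}, wnorm p (A.mulVec x.1) / wnorm p x.1

/-- Block weighted norm on (ℝ^d)^n: ‖x‖_{π⊗1_d} = (Σ_j ‖x_j‖²/π_j)^{1/2}. -/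
noncomputable def bnorm {n d : ℕ} (p : Fin n → ℝ)
    (x : Fin n → EuclideanSpace ℝ (Fin d)) : ℝ :=
  Real.sqrt (∑ j, ‖x j‖ ^ 2 / p j)

/-- Blockwise action of the Kronecker product A ⊗ I_d on (ℝ^d)^n. -/
noncomputable def kron {n d : ℕ} (A : Matrix (Fin n) (Fin n) ℝ)
    (x : Fin n → EuclideanSpace ℝ (Fin d)) : Fin n → EuclideanSpace ℝ (Fin d) :=
  fun i => ∑ j, A i j • x j

/-- Operator norm of A ⊗ I_d induced by ‖·‖_{π⊗1_d}. -/
noncomputable def bopNorm {n : ℕ} (d : ℕ) (p : Fin n → ℝ)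
    (A : Matrix (Fin n) (Fin n) ℝ) : ℝ :=
  ⨆ x : {x : Fin n → EuclideanSpace ℝ (Fin d) // x ≠ 0},
    bnorm p (kron A x.1) / bnorm p x.1

/-- Euclidean norm on (ℝ^d)^n. -/
noncomputable def enormB {n d : ℕ} (x : Fin n → EuclideanSpace ℝ (Fin d)) : ℝ :=
  Real.sqrt (∑ j, ‖x j‖ ^ 2)

section helpers

private lemma wnorm_one_eq {n : ℕ} (x : Fin n → ℝ) :
    wnorm (fun _ => 1) x = Real.sqrt (∑ j, x j ^ 2) := by
  simp [wnorm]

private lemma wnorm_nonneg {n : ℕ} (p x : Fin n → ℝ) : 0 ≤ wnorm p x :=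
  Real.sqrt_nonneg _

private lemma wnorm_one_sq {n : ℕ} (x : Fin n → ℝ) :
    wnorm (fun _ => 1) x ^ 2 = ∑ j, x j ^ 2 := by
  rw [wnorm_one_eq, Real.sq_sqrt (by positivity)]

private lemma wnorm_one_pos {n : ℕ} {x : Fin n → ℝ} (hx : x ≠ 0) :
    0 < wnorm (fun _ => (1:ℝ)) x := by
  rw [wnorm_one_eq, Real.sqrt_pos]
  obtain ⟨j, hj⟩ := Function.ne_iff.mp hx
  refine Finset.sum_pos' (fun i _ => by positivity) ⟨j, Finset.mem_univ j, ?_⟩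
  have hj' : x j ≠ 0 := hj
  positivity

private lemma wnorm_mulVec_le_frob {n : ℕ} (A : Matrix (Fin n) (Fin n) ℝ) (y : Fin n → ℝ) :
    wnorm (fun _ => 1) (A.mulVec y) ≤ Real.sqrt (∑ i, ∑ j, A i j ^ 2) * wnorm (fun _ => 1) y := by
  have h1 : ∑ i, (A.mulVec y) i ^ 2 ≤ (∑ i, ∑ j, A i j ^ 2) * (∑ j, y j ^ 2) := by
    rw [Finset.sum_mul]
    refine Finset.sum_le_sum fun i _ => ?_
    simpa [Matrix.mulVec, dotProduct] using
      Finset.sum_mul_sq_le_sq_mul_sq Finset.univ (A i) y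
  rw [wnorm_one_eq, wnorm_one_eq]
  calc Real.sqrt (∑ i, (A.mulVec y) i ^ 2)
      ≤ Real.sqrt ((∑ i, ∑ j, A i j ^ 2) * (∑ j, y j ^ 2)) := Real.sqrt_le_sqrt h1
    _ = Real.sqrt (∑ i, ∑ j, A i j ^ 2) * Real.sqrt (∑ j, y j ^ 2) :=
        Real.sqrt_mul (by positivity) _

private lemma matNorm_bdd {n : ℕ} (A : Matrix (Fin n) (Fin n) ℝ) :
    BddAbove (Set.range fun x : {x : Fin n → ℝ // x ≠ 0} =>
      wnorm (fun _ => 1) (A.mulVec x.1) / wnorm (fun _ => 1) x.1) := by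
  refine ⟨Real.sqrt (∑ i, ∑ j, A i j ^ 2), ?_⟩
  rintro _ ⟨x, rfl⟩
  rw [div_le_iff₀ (wnorm_one_pos x.2)]
  exact wnorm_mulVec_le_frob A x.1

private lemma matNorm_nonneg {n : ℕ} (A : Matrix (Fin n) (Fin n) ℝ) :
    0 ≤ matNorm (fun _ => 1) A :=
  Real.iSup_nonneg fun x => div_nonneg (wnorm_nonneg _ _) (wnorm_nonneg _ _)

private lemma wnorm_mulVec_le {n : ℕ} (A : Matrix (Fin n) (Fin n) ℝ) (y : Fin n → ℝ) :
    wnorm (fun _ => 1) (A.mulVec y) ≤ matNorm (fun _ => 1) A * wnorm (fun _ => 1) y := by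
  rcases eq_or_ne y 0 with rfl | hy
  · simp [Matrix.mulVec_zero, wnorm_one_eq]
  · have hpos := wnorm_one_pos hy
    have h := le_ciSup (matNorm_bdd A) (⟨y, hy⟩ : {x : Fin n → ℝ // x ≠ 0})
    calc wnorm (fun _ => 1) (A.mulVec y)
        = wnorm (fun _ => 1) (A.mulVec y) / wnorm (fun _ => 1) y * wnorm (fun _ => 1) y := by
          field_simp
      _ ≤ matNorm (fun _ => 1) A * wnorm (fun _ => 1) y :=
          mul_le_mul_of_nonneg_right h hpos.le

private lemma esum_apply {n d : ℕ} (f : Fin n → EuclideanSpace ℝ (Fin d)) (k : Fin d) :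
    (∑ j, f j) k = ∑ j, f j k :=
  by rw [WithLp.ofLp_sum]; exact Finset.sum_apply k Finset.univ _

private lemma enormB_nonneg {n d : ℕ} (x : Fin n → EuclideanSpace ℝ (Fin d)) :
    0 ≤ enormB x := Real.sqrt_nonneg _

private lemma enormB_sq {n d : ℕ} (x : Fin n → EuclideanSpace ℝ (Fin d)) :
    enormB x ^ 2 = ∑ j, ∑ k, x j k ^ 2 := by
  rw [enormB, Real.sq_sqrt (by positivity)]
  refine Finset.sum_congr rfl fun j _ => ?_
  rw [EuclideanSpace.norm_eq, Real.sq_sqrt (by positivity)]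
  simp [sq_abs]

private lemma kron_apply_coord {n d : ℕ} (A : Matrix (Fin n) (Fin n) ℝ)
    (x : Fin n → EuclideanSpace ℝ (Fin d)) (i : Fin n) (k : Fin d) :
    kron A x i k = A.mulVec (fun j => x j k) i := by
  rw [kron, esum_apply]
  simp [Matrix.mulVec, dotProduct, PiLp.smul_apply, smul_eq_mul]

private lemma enormB_kron_le {n d : ℕ} (A : Matrix (Fin n) (Fin n) ℝ)
    (x : Fin n → EuclideanSpace ℝ (Fin d)) :
    enormB (kron A x) ≤ matNorm (fun _ => 1) A * enormB x := by
  have hrhs : 0 ≤ matNorm (fun _ => 1) A * enormB x :=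
    mul_nonneg (matNorm_nonneg A) (enormB_nonneg x)
  have h2 : enormB (kron A x) ^ 2 ≤ (matNorm (fun _ => 1) A * enormB x) ^ 2 := by
    rw [enormB_sq, mul_pow, enormB_sq]
    calc ∑ j, ∑ k, kron A x j k ^ 2
        = ∑ k, ∑ j, (A.mulVec (fun j => x j k)) j ^ 2 := by
          rw [Finset.sum_comm]
          exact Finset.sum_congr rfl fun k _ => Finset.sum_congr rfl fun j _ => by
            rw [kron_apply_coord]
      _ ≤ ∑ k, matNorm (fun _ => 1) A ^ 2 * ∑ j, x j k ^ 2 := by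
          refine Finset.sum_le_sum fun k _ => ?_
          have := wnorm_mulVec_le A (fun j => x j k)
          have hsq := pow_le_pow_left₀ (wnorm_nonneg _ _) this 2
          rw [mul_pow, wnorm_one_sq, wnorm_one_sq] at hsq
          exact hsq
      _ = matNorm (fun _ => 1) A ^ 2 * ∑ j, ∑ k, x j k ^ 2 := by
          rw [← Finset.mul_sum, Finset.sum_comm]
  calc enormB (kron A x) = Real.sqrt (enormB (kron A x) ^ 2) :=
        (Real.sqrt_sq (enormB_nonneg _)).symm
    _ ≤ Real.sqrt ((matNorm (fun _ => 1) A * enormB x) ^ 2) := Real.sqrt_le_sqrt h2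
    _ = matNorm (fun _ => 1) A * enormB x := Real.sqrt_sq hrhs

end helpers

section kron_alg

variable {n d : ℕ}

private lemma kron_mul (A B : Matrix (Fin n) (Fin n) ℝ)
    (x : Fin n → EuclideanSpace ℝ (Fin d)) :
    kron (A * B) x = kron A (kron B x) := by
  funext i
  refine PiLp.ext fun k => ?_
  rw [kron_apply_coord, kron_apply_coord]
  have : (fun j => kron B x j k) = B.mulVec (fun j => x j k) := by
    funext j; rw [kron_apply_coord]
  rw [this, ← Matrix.mulVec_mulVec]

private lemma kron_one (x : Fin n → EuclideanSpace ℝ (Fin d)) : kron 1 x = x := by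
  funext i
  refine PiLp.ext fun k => ?_
  rw [kron_apply_coord, Matrix.one_mulVec]

private lemma kron_sub_right (A : Matrix (Fin n) (Fin n) ℝ)
    (x y : Fin n → EuclideanSpace ℝ (Fin d)) :
    kron A (x - y) = kron A x - kron A y := by
  funext i
  simp only [kron, Pi.sub_apply, smul_sub]
  rw [Finset.sum_sub_distrib]

private lemma kron_smul_right (A : Matrix (Fin n) (Fin n) ℝ) (c : ℝ)
    (x : Fin n → EuclideanSpace ℝ (Fin d)) :
    kron A (c • x) = c • kron A x := by
  funext i
  simp only [kron, Pi.smul_apply, Finset.smul_sum, smul_smul, mul_comm]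

private lemma kron_add_right (A : Matrix (Fin n) (Fin n) ℝ)
    (x y : Fin n → EuclideanSpace ℝ (Fin d)) :
    kron A (x + y) = kron A x + kron A y := by
  funext i
  simp only [kron, Pi.add_apply, smul_add]
  rw [Finset.sum_add_distrib]

private lemma kron_sum_right (A : Matrix (Fin n) (Fin n) ℝ) (s : Finset ℕ)
    (f : ℕ → Fin n → EuclideanSpace ℝ (Fin d)) :
    kron A (∑ u ∈ s, f u) = ∑ u ∈ s, kron A (f u) := by
  classical
  induction s using Finset.induction with
  | empty =>
      funext i; simp [kron]
  | insert a s h ih =>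
      rw [Finset.sum_insert h, Finset.sum_insert h, kron_add_right, ih]

end kron_alg



/-- If w(t+1) = (W⊗I_d)(w(t) − α g(t)) with M = sup_s ‖g(s)‖ < ∞ and
|||W^t − π 1_n^⊤||| ≤ D ζ^t in the Euclidean operator norm, then
‖w(t) − nπ⊗w̄(t)‖ ≤ D ζ^t ‖w(0)‖ + (α D ζ/(1−ζ)) M. -/
theorem weighted_consensus_bounded_perturbation {n d : ℕ}
    (W : Matrix (Fin n) (Fin n) ℝ)
    (hWnn : ∀ i j, 0 ≤ W i j) (hWcol : ∀ j, ∑ i, W i j = 1)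
    (p : Fin n → ℝ) (hppos : ∀ i, 0 < p i) (hpsum : ∑ i, p i = 1)
    (hWp : W.mulVec p = p)
    (α : ℝ) (hα : 0 < α)
    (g : ℕ → Fin n → EuclideanSpace ℝ (Fin d))
    (M : ℝ) (hM : IsLUB (Set.range fun s => enormB (g s)) M)
    (w : ℕ → Fin n → EuclideanSpace ℝ (Fin d))
    (hwrec : ∀ t, w (t + 1) = kron W (fun i => w t i - α • g t i))
    (D ζ : ℝ) (hD : 0 < D) (hζ : ζ ∈ Set.Ioo (0 : ℝ) 1)
    (hWconv : ∀ t : ℕ,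
      matNorm (fun _ => (1 : ℝ)) (W ^ t - Matrix.of fun i _ => p i) ≤ D * ζ ^ t)
    (t : ℕ) :
    enormB (fun i => w t i - ((n : ℝ) * p i) • ((n : ℝ)⁻¹ • ∑ j, w t j))
      ≤ D * ζ ^ t * enormB (w 0) + α * D * ζ / (1 - ζ) * M := by
  obtain ⟨hζ0, hζ1⟩ := hζ
  have h1ζ : 0 < 1 - ζ := by linarith
  have hMnn : 0 ≤ M := le_trans (enormB_nonneg (g 0)) (hM.1 ⟨0, rfl⟩)
  have hMub : ∀ s, enormB (g s) ≤ M := fun s => hM.1 ⟨s, rfl⟩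
  rcases Nat.eq_zero_or_pos n with hn | hn
  · subst hn
    have h0 : ∀ x : Fin 0 → EuclideanSpace ℝ (Fin d), enormB x = 0 := by
      intro x; simp [enormB]
    rw [h0, h0]
    have : 0 ≤ α * D * ζ / (1 - ζ) * M :=
      mul_nonneg (div_nonneg (by positivity) h1ζ.le) hMnn
    nlinarith
  set P : Matrix (Fin n) (Fin n) ℝ := Matrix.of fun i _ => p i with hPdef
  -- matrix identities
  have hPW : P * W = P := by
    ext i j
    simp only [Matrix.mul_apply, hPdef, Matrix.of_apply]
    rw [← Finset.mul_sum, hWcol j, mul_one]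
  have hWP : W * P = P := by
    ext i j
    have := congrFun hWp i
    simpa [Matrix.mul_apply, Matrix.mulVec, dotProduct, hPdef] using this
  have hPP : P * P = P := by
    ext i j
    simp only [Matrix.mul_apply, hPdef, Matrix.of_apply]
    rw [← Finset.mul_sum, hpsum, mul_one]
  have hPWt : ∀ k : ℕ, P * W ^ k = P := by
    intro k
    induction k with
    | zero => simp
    | succ k ih => rw [pow_succ, ← Matrix.mul_assoc, ih, hPW]
  have hkey : ∀ k : ℕ, (W - P) * (W ^ k - P) = W ^ (k + 1) - P := by
    intro k
    rw [Matrix.sub_mul, Matrix.mul_sub, Matrix.mul_sub, hWP, hPWt, hPP, ← pow_succ']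
    abel
  have h1PW : (1 - P) * W = W - P := by
    rw [Matrix.sub_mul, Matrix.one_mul, hPW]
  have hWP1 : (W - P) * (1 - P) = W - P := by
    rw [Matrix.mul_sub, Matrix.mul_one, Matrix.sub_mul, hWP, hPP]
    abel
  -- unrolled formula
  have hunroll : ∀ t : ℕ, kron (1 - P) (w t)
      = kron (W ^ t - P) (w 0) - α • ∑ s ∈ Finset.range t, kron (W ^ (t - s) - P) (g s) := by
    intro t
    induction t with
    | zero => simp [pow_zero]
    | succ t ih =>
      have hterm : kron (1 - P) (w (t + 1))
          = kron (W - P) (kron (1 - P) (w t)) - α • kron (W - P) (g t) := by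
        rw [hwrec t]
        have : (fun i => w t i - α • g t i) = w t - α • g t := rfl
        rw [this, ← kron_mul, h1PW, kron_sub_right, kron_smul_right, ← kron_mul, hWP1]
      rw [hterm, ih, kron_sub_right, kron_smul_right, kron_sum_right, ← kron_mul, hkey]
      have hsum : ∀ s ∈ Finset.range t,
          kron (W - P) (kron (W ^ (t - s) - P) (g s)) = kron (W ^ (t + 1 - s) - P) (g s) := by
        intro s hs
        have hst := Finset.mem_range.mp hs
        have he : t + 1 - s = (t - s) + 1 := by omega
        rw [← kron_mul, hkey, he]
      rw [Finset.sum_congr rfl hsum, Finset.sum_range_succ]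
      have htt : t + 1 - t = 1 := by omega
      rw [htt, pow_one, smul_add]
      abel
  -- identify goal LHS with kron (1 - P) (w t)
  have hn' : (n : ℝ) ≠ 0 := Nat.cast_ne_zero.mpr hn.ne'
  have hgoal_eq : (fun i => w t i - ((n : ℝ) * p i) • ((n : ℝ)⁻¹ • ∑ j, w t j))
      = kron (1 - P) (w t) := by
    funext i
    have hk : kron (1 - P) (w t) i = w t i - p i • ∑ j, w t j := by
      simp only [kron, Matrix.sub_apply, Matrix.one_apply, hPdef, Matrix.of_apply, sub_smul,
        ite_smul, one_smul, zero_smul]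
      rw [Finset.sum_sub_distrib, Finset.sum_ite_eq Finset.univ i (fun j => w t j)]
      simp [Finset.smul_sum]
    rw [hk]
    congr 1
    rw [smul_smul]
    congr 1
    field_simp
  rw [hgoal_eq, hunroll t]
  -- pass to norms via the linear equivalence to PiLp 2
  set L := (WithLp.linearEquiv 2 ℝ (∀ _ : Fin n, EuclideanSpace ℝ (Fin d))).symm with hL
  have hE : ∀ x : Fin n → EuclideanSpace ℝ (Fin d), enormB x = ‖L x‖ := by
    intro x
    rw [PiLp.norm_eq_of_L2, enormB]
    rfl
  have htri : enormB (kron (W ^ t - P) (w 0)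
        - α • ∑ s ∈ Finset.range t, kron (W ^ (t - s) - P) (g s))
      ≤ enormB (kron (W ^ t - P) (w 0))
        + α * ∑ s ∈ Finset.range t, enormB (kron (W ^ (t - s) - P) (g s)) := by
    rw [hE, map_sub, map_smul]
    calc ‖L (kron (W ^ t - P) (w 0)) - α • L (∑ s ∈ Finset.range t, kron (W ^ (t - s) - P) (g s))‖
        ≤ ‖L (kron (W ^ t - P) (w 0))‖
          + ‖α • L (∑ s ∈ Finset.range t, kron (W ^ (t - s) - P) (g s))‖ := norm_sub_le _ _
      _ ≤ enormB (kron (W ^ t - P) (w 0))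
          + α * ∑ s ∈ Finset.range t, enormB (kron (W ^ (t - s) - P) (g s)) := by
          rw [← hE]
          gcongr
          rw [norm_smul, Real.norm_eq_abs, abs_of_pos hα, map_sum]
          gcongr
          calc ‖∑ s ∈ Finset.range t, L (kron (W ^ (t - s) - P) (g s))‖
              ≤ ∑ s ∈ Finset.range t, ‖L (kron (W ^ (t - s) - P) (g s))‖ :=
                norm_sum_le _ _
            _ = ∑ s ∈ Finset.range t, enormB (kron (W ^ (t - s) - P) (g s)) :=
                Finset.sum_congr rfl fun s _ => (hE _).symm
  refine htri.trans ?_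
  have hterm1 : enormB (kron (W ^ t - P) (w 0)) ≤ D * ζ ^ t * enormB (w 0) :=
    (enormB_kron_le _ _).trans
      (mul_le_mul_of_nonneg_right (hWconv t) (enormB_nonneg _))
  have hterm2 : ∀ s ∈ Finset.range t,
      enormB (kron (W ^ (t - s) - P) (g s)) ≤ D * ζ ^ (t - s) * M := by
    intro s _
    exact (enormB_kron_le _ _).trans
      (mul_le_mul (hWconv (t - s)) (hMub s) (enormB_nonneg _)
        (mul_nonneg hD.le (pow_nonneg hζ0.le _)))
  have hgeo : ∑ s ∈ Finset.range t, ζ ^ s ≤ 1 / (1 - ζ) := by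
    rw [geom_sum_eq hζ1.ne, ← neg_div_neg_eq, neg_sub, neg_sub]
    exact div_le_div₀ zero_le_one (by linarith [pow_nonneg hζ0.le t]) h1ζ le_rfl
  have hζsum : ∑ s ∈ Finset.range t, ζ ^ (t - s) ≤ ζ / (1 - ζ) := by
    have hrefl : ∑ s ∈ Finset.range t, ζ ^ (t - s) = ∑ s ∈ Finset.range t, ζ ^ (s + 1) := by
      rw [← Finset.sum_range_reflect]
      exact Finset.sum_congr rfl fun s hs => by
        have := Finset.mem_range.mp hs
        congr 1
        omega
    have hmul : ∑ s ∈ Finset.range t, ζ ^ (s + 1) = ζ * ∑ s ∈ Finset.range t, ζ ^ s := by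
      rw [Finset.mul_sum]; exact Finset.sum_congr rfl fun s _ => by ring
    rw [hrefl, hmul]
    calc ζ * ∑ s ∈ Finset.range t, ζ ^ s ≤ ζ * (1 / (1 - ζ)) :=
          mul_le_mul_of_nonneg_left hgeo hζ0.le
      _ = ζ / (1 - ζ) := by ring
  have hsumbound : ∑ s ∈ Finset.range t, enormB (kron (W ^ (t - s) - P) (g s))
      ≤ D * M * (ζ / (1 - ζ)) := by
    calc ∑ s ∈ Finset.range t, enormB (kron (W ^ (t - s) - P) (g s))
        ≤ ∑ s ∈ Finset.range t, D * ζ ^ (t - s) * M := Finset.sum_le_sum hterm2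
      _ = D * M * ∑ s ∈ Finset.range t, ζ ^ (t - s) := by
          rw [Finset.mul_sum]; exact Finset.sum_congr rfl fun s _ => by ring
      _ ≤ D * M * (ζ / (1 - ζ)) :=
          mul_le_mul_of_nonneg_left hζsum (mul_nonneg hD.le hMnn)
  calc enormB (kron (W ^ t - P) (w 0))
        + α * ∑ s ∈ Finset.range t, enormB (kron (W ^ (t - s) - P) (g s))
      ≤ D * ζ ^ t * enormB (w 0) + α * (D * M * (ζ / (1 - ζ))) := by
        have := mul_le_mul_of_nonneg_left hsumbound hα.le
        linarith
    _ = D * ζ ^ t * enormB (w 0) + α * D * ζ / (1 - ζ) * M := by ring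
end

section
/- Let f : ℝ^d → ℝ be differentiable, β-strongly convex, with L-Lipschitz gradient, and let x_* be its minimizer. Then for every stepsize α with 0 < α ≤ 2/(L+β) and every x ∈ ℝ^d, ‖x − α∇f(x) − x_*‖ ≤ (1 − αβL/(L+β)) ‖x − x_*‖. -/
open Set InnerProductSpace

variable {E : Type*} [NormedAddCommGroup E] [InnerProductSpace ℝ E] [CompleteSpace E]

/-- derivative of the line map -/
lemma line_hasDerivAt (x v : E) (t : ℝ) : HasDerivAt (fun t : ℝ => x + t • v) v t := by
  simpa using ((hasDerivAt_id t).smul_const v).const_add x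

lemma psi_hasDerivAt {φ : E → ℝ} {g : E → E} (hg : ∀ z, HasGradientAt φ (g z) z)
    (x v : E) (t : ℝ) :
    HasDerivAt (fun t : ℝ => φ (x + t • v)) ⟪g (x + t • v), v⟫_ℝ t := by
  have h := ((hg (x + t • v)).hasFDerivAt.comp_hasDerivAt t (line_hasDerivAt x v t))
  exact h

/-- convex gradient inequality -/
lemma convex_grad_ineq {φ : E → ℝ} {g : E → E} (hφ : ConvexOn ℝ Set.univ φ)
    (hg : ∀ z, HasGradientAt φ (g z) z) (x y : E) :
    φ x + ⟪g x, y - x⟫_ℝ ≤ φ y := by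
  set v := y - x with hv
  have hd : HasDerivAt (fun t : ℝ => φ (x + t • v)) ⟪g x, v⟫_ℝ 0 := by
    simpa using psi_hasDerivAt hg x v 0
  have hslope : Filter.Tendsto (slope (fun t : ℝ => φ (x + t • v)) 0) (nhdsWithin 0 {(0:ℝ)}ᶜ)
      (nhds ⟪g x, v⟫_ℝ) := hasDerivAt_iff_tendsto_slope.1 hd
  have key : ⟪g x, v⟫_ℝ ≤ φ y - φ x := by
    have hmono : nhdsWithin (0:ℝ) (Set.Ioi 0) ≤ nhdsWithin 0 {(0:ℝ)}ᶜ :=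
      nhdsWithin_mono _ (fun t ht => ne_of_gt ht)
    refine le_of_tendsto (hslope.mono_left hmono) ?_
    · filter_upwards [Ioc_mem_nhdsGT_of_mem (Set.left_mem_Ico.2 zero_lt_one)] with t ht
      have ht0 : 0 < t := ht.1
      have ht1 : t ≤ 1 := ht.2
      have hconv := hφ.2 (mem_univ x) (mem_univ y) (show (0:ℝ) ≤ 1 - t by linarith)
        ht0.le (show (1 - t) + t = 1 by ring)
      have hxt : x + t • v = (1 - t) • x + t • y := by
        rw [hv]; module
      rw [slope_def_field]
      have : φ (x + t • v) ≤ (1 - t) * φ x + t * φ y := by rw [hxt]; exact hconv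
      simp only [smul_eq_mul, sub_zero, zero_smul, add_zero] at *
      rw [div_le_iff₀ ht0]
      nlinarith
  linarith

/-- descent lemma from one-sided curvature bound -/
lemma descent_lemma {φ : E → ℝ} {g : E → E} (hg : ∀ z, HasGradientAt φ (g z) z)
    (hgc : Continuous g) {K : ℝ}
    (hub : ∀ a b, ⟪g a - g b, a - b⟫_ℝ ≤ K * ‖a - b‖^2) (x y : E) :
    φ y ≤ φ x + ⟪g x, y - x⟫_ℝ + K/2 * ‖y - x‖^2 := by
  set v := y - x with hv
  have hψ : ∀ t : ℝ, HasDerivAt (fun t => φ (x + t • v)) ⟪g (x + t • v), v⟫_ℝ t :=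
    psi_hasDerivAt hg x v
  have hcont : Continuous (fun t : ℝ => ⟪g (x + t • v), v⟫_ℝ) := by
    apply Continuous.inner
    · exact hgc.comp (by continuity)
    · exact continuous_const
  have hint : φ y - φ x = ∫ t in (0:ℝ)..1, ⟪g (x + t • v), v⟫_ℝ := by
    have := intervalIntegral.integral_eq_sub_of_hasDerivAt (f := fun t => φ (x + t • v))
      (fun t _ => hψ t) (hcont.intervalIntegrable 0 1)
    rw [this]
    norm_num [hv]
  have hptwise : ∀ t ∈ Set.Icc (0:ℝ) 1,
      ⟪g (x + t • v), v⟫_ℝ ≤ ⟪g x, v⟫_ℝ + K * ‖v‖^2 * t := by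
    intro t ht
    rcases eq_or_lt_of_le ht.1 with h0 | h0
    · simp [← h0]
    · have h1 := hub (x + t • v) x
      have h2 : (x + t • v) - x = t • v := by abel
      rw [h2] at h1
      have h3 : ⟪g (x + t • v) - g x, t • v⟫_ℝ ≤ K * (t^2 * ‖v‖^2) := by
        calc ⟪g (x + t • v) - g x, t • v⟫_ℝ ≤ K * ‖t • v‖^2 := h1
        _ = K * (t^2 * ‖v‖^2) := by
            rw [norm_smul, mul_pow, Real.norm_eq_abs, sq_abs]
      rw [real_inner_smul_right, inner_sub_left] at h3
      nlinarith
  have hcont2 : Continuous (fun t : ℝ => ⟪g x, v⟫_ℝ + K * ‖v‖^2 * t) :=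
    continuous_const.add (continuous_const.mul continuous_id)
  have hmono : (∫ t in (0:ℝ)..1, ⟪g (x + t • v), v⟫_ℝ)
      ≤ ∫ t in (0:ℝ)..1, (⟪g x, v⟫_ℝ + K * ‖v‖^2 * t) :=
    intervalIntegral.integral_mono_on (zero_le_one)
      (hcont.intervalIntegrable 0 1) (hcont2.intervalIntegrable 0 1) hptwise
  have hval : (∫ t in (0:ℝ)..1, (⟪g x, v⟫_ℝ + K * ‖v‖^2 * t))
      = ⟪g x, v⟫_ℝ + K/2 * ‖v‖^2 := by
    rw [intervalIntegral.integral_add (intervalIntegrable_const)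
      ((intervalIntegral.intervalIntegrable_id).const_mul _)]
    rw [intervalIntegral.integral_const_mul, integral_id]
    simp
    ring
  rw [hval] at hmono
  rw [← hint] at hmono
  linarith

lemma hasGradientAt_half_norm_sq (β : ℝ) (z : E) :
    HasGradientAt (fun z : E => β / 2 * ‖z‖ ^ 2) (β • z) z := by
  have h1 : HasFDerivAt (fun z : E => ‖z‖ ^ 2) (2 • (innerSL ℝ z)) z :=
    (hasStrictFDerivAt_norm_sq z).hasFDerivAt
  have h2 : HasFDerivAt (fun z : E => β / 2 * ‖z‖ ^ 2) ((β/2) • (2 • (innerSL ℝ z))) z :=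
    h1.const_smul (β/2)
  rw [hasGradientAt_iff_hasFDerivAt]
  convert h2 using 1
  · rfl
  apply ContinuousLinearMap.ext
  intro w
  simp [InnerProductSpace.toDual, real_inner_smul_left]
  ring

/-- cocoercivity (Baillon–Haddad type) -/
lemma cocoercive {φ : E → ℝ} {g : E → E} (hφ : ConvexOn ℝ Set.univ φ)
    (hg : ∀ z, HasGradientAt φ (g z) z) (hgc : Continuous g) {K : ℝ} (hK : 0 < K)
    (hub : ∀ a b, ⟪g a - g b, a - b⟫_ℝ ≤ K * ‖a - b‖^2) (a b : E) :
    (1/K) * ‖g a - g b‖^2 ≤ ⟪g a - g b, a - b⟫_ℝ := by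
  have star : ∀ a b : E, φ a + ⟪g a, b - a⟫_ℝ + 1/(2*K) * ‖g b - g a‖^2 ≤ φ b := by
    intro a b
    set u := g b - g a with hu
    set z := b - (1/K) • u with hz
    have h1 := descent_lemma hg hgc hub b z
    have h2 := convex_grad_ineq hφ hg a z
    have hzb : z - b = -((1/K) • u) := by rw [hz]; abel
    have hza : z - a = (b - a) - (1/K) • u := by rw [hz]; abel
    have e1 : ⟪g b, z - b⟫_ℝ = -(1/K * ⟪g b, u⟫_ℝ) := by
      rw [hzb, inner_neg_right, real_inner_smul_right]
    have e2 : ‖z - b‖^2 = (1/K)^2 * ‖u‖^2 := by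
      rw [hzb, norm_neg, norm_smul, mul_pow, Real.norm_eq_abs, sq_abs]
    have e3 : ⟪g a, z - a⟫_ℝ = ⟪g a, b - a⟫_ℝ - 1/K * ⟪g a, u⟫_ℝ := by
      rw [hza, inner_sub_right, real_inner_smul_right]
    have e4 : ⟪g b, u⟫_ℝ - ⟪g a, u⟫_ℝ = ‖u‖^2 := by
      rw [← inner_sub_left, ← hu, real_inner_self_eq_norm_sq]
    have e5 : K/2 * ((1/K)^2 * ‖u‖^2) = 1/(2*K) * ‖u‖^2 := by
      field_simp
    have e6 : 1/K * ⟪g b, u⟫_ℝ - 1/K * ⟪g a, u⟫_ℝ = 1/K * ‖u‖^2 := by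
      rw [← mul_sub, e4]
    have e7 : 1/K * ‖u‖^2 - 1/(2*K) * ‖u‖^2 = 1/(2*K) * ‖u‖^2 := by
      field_simp; ring
    rw [e1, e2] at h1; rw [e3] at h2
    linarith
  have s1 := star a b
  have s2 := star b a
  have e8 : ⟪g a, b - a⟫_ℝ + ⟪g b, a - b⟫_ℝ = -⟪g a - g b, a - b⟫_ℝ := by
    rw [inner_sub_left, show (b - a) = -(a - b) by abel, inner_neg_right]
    ring
  have e9 : ‖g b - g a‖ = ‖g a - g b‖ := norm_sub_rev _ _
  rw [e9] at s1
  have e10 : 1/(2*K) * ‖g a - g b‖^2 + 1/(2*K) * ‖g a - g b‖^2 = 1/K * ‖g a - g b‖^2 := by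
    field_simp; ring
  linarith

/-- combined coercivity for strongly convex + Lipschitz gradient -/
lemma coercivity {f : E → ℝ} {gf : E → E} (hgrad : ∀ z, HasGradientAt f (gf z) z)
    {L β : ℝ} (hL : 0 < L) (hβ : 0 < β)
    (hsc : ConvexOn ℝ Set.univ (fun z : E => f z - β / 2 * ‖z‖ ^ 2))
    (hlip : ∀ a b, ‖gf a - gf b‖ ≤ L * ‖a - b‖) (x y : E) :
    β * L / (L + β) * ‖x - y‖^2 + 1/(L + β) * ‖gf x - gf y‖^2
      ≤ ⟪gf x - gf y, x - y⟫_ℝ := by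
  have hLβ : (0:ℝ) < L + β := by linarith
  set gh := fun z : E => gf z - β • z with hgh_def
  have hgh : ∀ z, HasGradientAt (fun z : E => f z - β / 2 * ‖z‖ ^ 2) (gh z) z := by
    intro z
    have h1 := (hgrad z).hasFDerivAt.sub (hasGradientAt_half_norm_sq β z).hasFDerivAt
    rw [hasGradientAt_iff_hasFDerivAt, map_sub]
    exact h1
  have hgfc : Continuous gf := by
    have hl : LipschitzWith (Real.toNNReal L) gf := by
      apply LipschitzWith.of_dist_le_mul
      intro a b
      rw [dist_eq_norm, dist_eq_norm, Real.coe_toNNReal _ hL.le]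
      exact hlip a b
    exact hl.continuous
  have hghc : Continuous gh := hgfc.sub (continuous_id.const_smul β)
  have hdiff : ∀ a b : E, gh a - gh b = (gf a - gf b) - β • (a - b) := by
    intro a b
    simp only [hgh_def, smul_sub]
    abel
  have hexp : ∀ a b : E, ⟪gh a - gh b, a - b⟫_ℝ
      = ⟪gf a - gf b, a - b⟫_ℝ - β * ‖a - b‖^2 := by
    intro a b
    rw [hdiff, inner_sub_left, real_inner_smul_left, real_inner_self_eq_norm_sq]
  have hub : ∀ a b : E, ⟪gh a - gh b, a - b⟫_ℝ ≤ (L - β) * ‖a - b‖^2 := by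
    intro a b
    rw [hexp]
    have h1 : ⟪gf a - gf b, a - b⟫_ℝ ≤ ‖gf a - gf b‖ * ‖a - b‖ := real_inner_le_norm _ _
    have h2 : ‖gf a - gf b‖ * ‖a - b‖ ≤ (L * ‖a - b‖) * ‖a - b‖ :=
      mul_le_mul_of_nonneg_right (hlip a b) (norm_nonneg _)
    nlinarith [norm_nonneg (a - b)]
  have hmono : ∀ a b : E, β * ‖a - b‖^2 ≤ ⟪gf a - gf b, a - b⟫_ℝ := by
    intro a b
    have h1 := convex_grad_ineq hsc hgh a b
    have h2 := convex_grad_ineq hsc hgh b a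
    have e8 : ⟪gh a, b - a⟫_ℝ + ⟪gh b, a - b⟫_ℝ = -⟪gh a - gh b, a - b⟫_ℝ := by
      have e8a : ⟪gh a, b - a⟫_ℝ = -⟪gh a, a - b⟫_ℝ := by
        rw [show b - a = -(a - b) by abel, inner_neg_right]
      have e8b : ⟪gh a - gh b, a - b⟫_ℝ = ⟪gh a, a - b⟫_ℝ - ⟪gh b, a - b⟫_ℝ :=
        inner_sub_left _ _ _
      rw [e8a, e8b]
      ring
    have h3 : 0 ≤ ⟪gh a - gh b, a - b⟫_ℝ := by linarith
    rw [hexp] at h3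
    linarith
  set D := ‖x - y‖ with hD
  set G := ‖gf x - gf y‖ with hG
  set s := ⟪gf x - gf y, x - y⟫_ℝ with hs
  have hkey : β * L * D^2 + G^2 ≤ (L + β) * s := by
    rcases le_or_gt L β with hcase | hcase
    · have h1 : G ≤ L * D := hlip x y
      have h2 : β * D^2 ≤ s := hmono x y
      have hD0 : 0 ≤ D := norm_nonneg _
      have hG0 : 0 ≤ G := norm_nonneg _
      nlinarith [sq_nonneg D, mul_le_mul h1 h1 hG0 (by positivity : (0:ℝ) ≤ L * D),
        mul_nonneg (sub_nonneg.2 hcase) (sq_nonneg D)]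
    · have hK : (0:ℝ) < L - β := by linarith
      have hcoco := cocoercive hsc hgh hghc hK hub x y
      rw [hexp] at hcoco
      have hnorm : ‖gh x - gh y‖^2 = G^2 - 2 * β * s + β^2 * D^2 := by
        rw [hdiff, norm_sub_sq_real, real_inner_smul_right, norm_smul, mul_pow,
          Real.norm_eq_abs, sq_abs, ← hG, ← hs, ← hD]
        ring
      rw [hnorm] at hcoco
      have h5 : G^2 - 2*β*s + β^2*D^2 ≤ (L - β) * (s - β * D^2) := by
        have := mul_le_mul_of_nonneg_left hcoco (le_of_lt hK)
        rw [← mul_assoc] at this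
        rw [mul_one_div, div_self (ne_of_gt hK), one_mul] at this
        linarith
      nlinarith
  have heq : β * L / (L + β) * D^2 + 1/(L + β) * G^2 = (β * L * D^2 + G^2) / (L + β) := by
    field_simp
  rw [heq, div_le_iff₀ hLβ]
  linarith


set_option maxHeartbeats 1000000 in
/-- For a β-strongly convex function f with L-Lipschitz gradient and
minimizer x_*, and 0 < α ≤ 2/(L+β),
‖x − α∇f(x) − x_*‖ ≤ (1 − αβL/(L+β))‖x − x_*‖. -/
theorem gradient_step_contraction {d : ℕ}
    (f : EuclideanSpace ℝ (Fin d) → ℝ)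
    (gf : EuclideanSpace ℝ (Fin d) → EuclideanSpace ℝ (Fin d))
    (hgrad : ∀ x, HasGradientAt f (gf x) x)
    (L β : ℝ) (hL : 0 < L) (hβ : 0 < β)
    (hsc : ConvexOn ℝ Set.univ
      (fun x : EuclideanSpace ℝ (Fin d) => f x - β / 2 * ‖x‖ ^ 2))
    (hlip : ∀ x x', ‖gf x - gf x'‖ ≤ L * ‖x - x'‖)
    (xstar : EuclideanSpace ℝ (Fin d)) (hmin : ∀ x, f xstar ≤ f x)
    (α : ℝ) (hα0 : 0 < α) (hα : α ≤ 2 / (L + β))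
    (x : EuclideanSpace ℝ (Fin d)) :
    ‖x - α • gf x - xstar‖ ≤ (1 - α * β * L / (L + β)) * ‖x - xstar‖ := by
  have hLβ : (0:ℝ) < L + β := by linarith
  -- gradient vanishes at the minimizer
  have gstar : gf xstar = 0 := by
    have hloc : IsLocalMin f xstar := Filter.Eventually.of_forall hmin
    have h0 := hloc.hasFDerivAt_eq_zero (hgrad xstar).hasFDerivAt
    exact (InnerProductSpace.toDual ℝ (EuclideanSpace ℝ (Fin d))).injective
      (by rw [h0]; exact (map_zero _).symm)
  have hco := coercivity hgrad hL hβ hsc hlip x xstar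
  rw [gstar, sub_zero] at hco
  set D := ‖x - xstar‖ with hD
  set G := ‖gf x‖ with hG
  set s := ⟪gf x, x - xstar⟫_ℝ with hs
  have hD0 : 0 ≤ D := norm_nonneg _
  have hG0 : 0 ≤ G := norm_nonneg _
  have hw : x - α • gf x - xstar = (x - xstar) - α • gf x := by abel
  have hw2 : ‖x - α • gf x - xstar‖^2 = D^2 - 2*(α*s) + α^2*G^2 := by
    rw [hw, norm_sub_sq_real, real_inner_smul_right, norm_smul, mul_pow,
      Real.norm_eq_abs, sq_abs, real_inner_comm, ← hs, ← hD, ← hG]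
    try ring
  set c := β * L / (L + β) with hc
  have hc0 : 0 < c := by positivity
  -- α² ≤ 2α/(L+β)
  have hα2 : α^2 ≤ 2*α/(L+β) := by
    rw [le_div_iff₀ hLβ] at hα
    rw [le_div_iff₀ hLβ]
    nlinarith
  -- 1 - α*c ≥ 0
  have hcontr : 0 ≤ 1 - α * c := by
    have h1 : α * c ≤ (2/(L+β)) * c := by
      apply mul_le_mul_of_nonneg_right hα hc0.le
    have h2 : (2/(L+β)) * c ≤ 1 := by
      rw [hc, div_mul_div_comm, div_le_one (by positivity)]
      nlinarith [sq_nonneg (L - β)]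
    linarith
  have hsq : ‖x - α • gf x - xstar‖^2 ≤ ((1 - α*c) * D)^2 := by
    rw [hw2]
    have hG2 : 1/(L+β) * G^2 ≤ s - c * D^2 := by linarith
    have u1 : 2*α*(c*D^2 + 1/(L+β)*G^2) ≤ 2*α*s :=
      mul_le_mul_of_nonneg_left hco (by positivity)
    have u2 : α^2*G^2 ≤ (2*α/(L+β))*G^2 := mul_le_mul_of_nonneg_right hα2 (sq_nonneg G)
    have t1 : D^2 - 2*(α*s) + α^2*G^2
        ≤ D^2 - 2*α*(c*D^2 + 1/(L+β)*G^2) + (2*α/(L+β))*G^2 := by linarith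
    have t2 : D^2 - 2*α*(c*D^2 + 1/(L+β)*G^2) + (2*α/(L+β))*G^2
        = (1 - 2*α*c) * D^2 := by ring
    have t3 : (1 - 2*α*c) * D^2 ≤ ((1 - α*c)*D)^2 := by nlinarith [sq_nonneg (α*c*D)]
    linarith
  have hfin : ‖x - α • gf x - xstar‖ ≤ (1 - α*c) * D := by
    have hM0 : 0 ≤ (1 - α*c) * D := mul_nonneg hcontr hD0
    calc ‖x - α • gf x - xstar‖ = Real.sqrt (‖x - α • gf x - xstar‖^2) :=
          (Real.sqrt_sq (norm_nonneg _)).symm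
      _ ≤ Real.sqrt (((1 - α*c) * D)^2) := Real.sqrt_le_sqrt hsq
      _ = (1 - α*c) * D := Real.sqrt_sq hM0
  have : 1 - α * β * L / (L + β) = 1 - α * c := by
    rw [hc]; field_simp
  rw [this]
  exact hfin
end
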